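/- Let 1 ≤ p < ∞, k ≥ 1, and let μ ∈ M^p be a measure whose support contains at least k points. If c ∈ Ω̄^k is a codebook such that μ(V_j(c)) = 0 for some 1 ≤ j ≤ k, then R_{k,p}(c) > R_k^*; in particular such a codebook is not optimal. Consequently, a codebook with two equal centroids, or with a centroid on ∂Ω, is not optimal. -/

import Mathlib

open MeasureTheory ENNReal Set

noncomputable section

abbrev E2 := EuclideanSpace ℝ (Fin 2)

/-- The open half-plane `Ω` above the diagonal. -/
def Omega : Set E2 := {x | x 0 < x 1}

/-- The diagonal `∂Ω`. -/
def diagSet : Set E2 := {x | x 0 = x 1}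

/-- `Ω̄ = Ω ∪ ∂Ω`. -/
def OmegaBar : Set E2 := Omega ∪ diagSet

/-- Euclidean distance of a point to the diagonal. -/
def dDiag (x : E2) : ℝ := Metric.infDist x diagSet

/-- Total persistence `Pers_p(μ) = ∫_Ω ‖x-∂Ω‖^p dμ(x)`. -/
def Pers (p : ℝ) (μ : Measure E2) : ℝ≥0∞ :=
  ∫⁻ x in Omega, ENNReal.ofReal (dDiag x ^ p) ∂μ

/-- Admissible partial transport plans: measures on `Ω̄ × Ω̄` whose first (resp. second)
marginal coincides with `μ` (resp. `ν`) on `Ω`. -/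
def Adm (μ ν : Measure E2) : Set (Measure (E2 × E2)) :=
  {π | (π.map Prod.fst).restrict Omega = μ.restrict Omega ∧
       (π.map Prod.snd).restrict Omega = ν.restrict Omega ∧
       π ((OmegaBar ×ˢ OmegaBar)ᶜ) = 0}

/-- `OT_p(μ,ν)^p`, the optimal partial transport cost. -/
def OTpow (p : ℝ) (μ ν : Measure E2) : ℝ≥0∞ :=
  ⨅ π ∈ Adm μ ν, ∫⁻ z, ENNReal.ofReal (dist z.1 z.2 ^ p) ∂π

/-- The distance `OT_p(μ,ν)`. -/
def OTp (p : ℝ) (μ ν : Measure E2) : ℝ≥0∞ := (OTpow p μ ν) ^ (1/p)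

/-- The closed ℓ¹-ball `A_L` of radius `L/√2` centered at `(-L/√8, L/√8)`. -/
def ballA (L : ℝ) : Set E2 :=
  {x | |x 0 + L / Real.sqrt 8| + |x 1 - L / Real.sqrt 8| ≤ L / Real.sqrt 2}

/-- Membership in `M^q_{L,M}`: supported in `Ω`, in `A_L`, with `Pers_q ≤ M`. -/
def MemMq (q L M : ℝ) (μ : Measure E2) : Prop :=
  μ Omegaᶜ = 0 ∧ μ (ballA L)ᶜ = 0 ∧ Pers q μ ≤ ENNReal.ofReal M

/-- Empirical EPD `μ̄_n = (1/n)(μ₁ + ⋯ + μ_n)` of a sample of `n` persistence measures. -/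
def empEPD (n : ℕ) (ω : Fin n → Measure E2) : Measure E2 :=
  (n : ℝ≥0∞)⁻¹ • ∑ i : Fin n, ω i

/-- Distance from `x` to the `j`-th centroid, the last index standing for the diagonal. -/
def cdistC (k : ℕ) (c : Fin k → E2) (j : Fin (k+1)) (x : E2) : ℝ :=
  if h : (j : ℕ) < k then dist x (c ⟨j, h⟩) else dDiag x

/-- Voronoi cells `V_j(c)` (the last cell being the diagonal cell `V_{k+1}`). -/
def Vcell (k : ℕ) (c : Fin k → E2) (j : Fin (k+1)) : Set E2 :=
  {x ∈ Omega | (∀ j' : Fin (k+1), j' < j → cdistC k c j x ≤ cdistC k c j' x) ∧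
               (∀ j' : Fin (k+1), j < j' → cdistC k c j x < cdistC k c j' x)}

/-- The distortion `R_{k,p}(c)`. -/
def distortion (p : ℝ) (μ : Measure E2) (k : ℕ) (c : Fin k → E2) : ℝ≥0∞ :=
  (∑ j : Fin (k+1), ∫⁻ x in Vcell k c j, ENNReal.ofReal (cdistC k c j x ^ p) ∂μ) ^ (1/p)

/-- The optimal distortion `R_k^* = inf {R_{k,p}(c) : c ∈ Ω̄^k}`. -/
def Rstar (p : ℝ) (μ : Measure E2) (k : ℕ) : ℝ≥0∞ :=
  ⨅ (c : Fin k → E2) (_ : ∀ j, c j ∈ OmegaBar), distortion p μ k c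

/-- The set `C_k` of optimal codebooks. -/
def Copt (p : ℝ) (μ : Measure E2) (k : ℕ) : Set (Fin k → E2) :=
  {c | (∀ j, c j ∈ OmegaBar) ∧ distortion p μ k c = Rstar p μ k}

/-- Support of a measure. -/
def msupport (μ : Measure E2) : Set E2 :=
  {x | ∀ U : Set E2, IsOpen U → x ∈ U → 0 < μ U}

/-- Euclidean distance between codebooks seen as vectors of `ℝ^{2k}`. -/
def cbDist (k : ℕ) (c c' : Fin k → E2) : ℝ :=
  Real.sqrt (∑ j : Fin k, dist (c j) (c' j) ^ 2)

/-- Euclidean norm on `(ℝ²)^k`. -/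
def pnorm2 (k : ℕ) (v : Fin k → E2) : ℝ := Real.sqrt (∑ j : Fin k, ‖v j‖ ^ 2)

/-- Distance between the `j`-th and `j'`-th centroids, the last index standing
for the diagonal. -/
def cdistPt (k : ℕ) (c : Fin k → E2) (j j' : Fin (k+1)) : ℝ :=
  if h : (j : ℕ) < k then
    (if h' : (j' : ℕ) < k then dist (c ⟨j, h⟩) (c ⟨j', h'⟩) else dDiag (c ⟨j, h⟩))
  else (if h' : (j' : ℕ) < k then dDiag (c ⟨j', h'⟩) else 0)

/-- The set `N(c)` of points lying on a boundary between two Voronoi cells. -/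
def Nset (k : ℕ) (c : Fin k → E2) : Set E2 :=
  {x ∈ Omega | ∃ j j' : Fin (k+1), j < j' ∧ x ∈ Vcell k c j ∧ cdistC k c j x = cdistC k c j' x}

/-- The `t`-neighborhood `A^t` of `A` in `Ω`. -/
def tN (A : Set E2) (t : ℝ) : Set E2 := {x ∈ Omega | ∃ a ∈ A, dist x a ≤ t}

/-- `w₂(c, m)_j = ∫_{V_j(c)} x dm(x)`. -/
def w2 (k : ℕ) (c : Fin k → E2) (m : Measure E2) (j : Fin k) : E2 :=
  ∫ x in Vcell k c j.castSucc, x ∂m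

/-- Absolute difference in `ℝ≥0∞`. -/
def eabs (a b : ℝ≥0∞) : ℝ≥0∞ := (a - b) + (b - a)

/-!
Since every point of `Ω` lies in exactly one Voronoi cell, `R_{k,p}(c)^p` is the integral over
`Ω` of the `p`-th power of the distance to the nearest of `c₁, …, c_k, ∂Ω`. If the cell of `c_j`
is `μ`-null, moving `c_j` to a point `y ∈ supp μ ∩ Ω` distinct from the other centroids (one
exists because the support has at least `k` points) does not increase that distance off the
cell, and strictly decreases it on a neighbourhood of `y`, which has positive mass.
-/

theorem exists_mem_support_inter_notMem {X : Type*} [TopologicalSpace X] [T1Space X]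
    [HereditarilyLindelofSpace X] [MeasurableSpace X] {μ : Measure X} {S : Set X}
    (hS : μ Sᶜ = 0) {s F : Finset X} (hs : ↑s ⊆ μ.support) (hF : F.card < s.card) :
    ∃ x ∈ μ.support ∩ S, x ∉ F := by
  by_contra! hSF
  have hnull : μ (F : Set X)ᶜ = 0 := by
    have hdiff : S \ F ⊆ μ.supportᶜ := fun x hx hsupp => hx.2 (hSF x ⟨hsupp, hx.1⟩)
    refine measure_mono_null (fun x hx => ?_) (measure_union_null hS
      (measure_mono_null hdiff Measure.measure_compl_support))
    by_cases hxS : x ∈ S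
    exacts [Or.inr ⟨hxS, hx⟩, Or.inl hxS]
  have hsF : s ⊆ F := fun x hx =>
    Measure.support_subset_of_isClosed F.finite_toSet.isClosed (mem_ae_iff.2 hnull) (hs hx)
  exact (Finset.card_le_card hsF).not_gt hF

theorem msupport_eq_support (μ : Measure E2) : msupport μ = μ.support := by
  rw [Measure.support_eq_forall_isOpen]
  exact Set.ext fun x => forall_congr' fun U => forall_comm

theorem measurableSet_Omega : MeasurableSet Omega :=
  measurableSet_lt (EuclideanSpace.proj (0 : Fin 2)).continuous.measurable
    (EuclideanSpace.proj (1 : Fin 2)).continuous.measurable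

theorem dDiag_pos_of_mem_Omega {x : E2} (hx : x ∈ Omega) : 0 < dDiag x := by
  have hdiag : IsClosed diagSet :=
    isClosed_eq (EuclideanSpace.proj (0 : Fin 2)).continuous
      (EuclideanSpace.proj (1 : Fin 2)).continuous
  exact (hdiag.notMem_iff_infDist_pos ⟨0, rfl⟩).1 fun h => hx.ne h

section Voronoi

variable {k : ℕ} (c : Fin k → E2)

theorem cdistC_nonneg (j : Fin (k + 1)) (x : E2) : 0 ≤ cdistC k c j x := by
  unfold cdistC
  split_ifs
  exacts [dist_nonneg, Metric.infDist_nonneg]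

theorem continuous_cdistC (j : Fin (k + 1)) : Continuous (cdistC k c j) := by
  unfold cdistC
  split_ifs
  exacts [continuous_id.dist continuous_const, Metric.continuous_infDist_pt diagSet]

theorem cdistC_last (x : E2) : cdistC k c (Fin.last k) x = dDiag x :=
  dif_neg (by simp)

theorem cdistC_castSucc (j : Fin k) (x : E2) : cdistC k c j.castSucc x = dist x (c j) :=
  dif_pos j.castSucc_lt_last

theorem cdistC_update_of_ne {j : Fin k} (y : E2) {i : Fin (k + 1)} (hi : i ≠ j.castSucc)
    (x : E2) : cdistC k (Function.update c j y) i x = cdistC k c i x := by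
  unfold cdistC
  split_ifs with h
  · rw [Function.update_of_ne]
    rintro rfl
    exact hi rfl
  · rfl

theorem Vcell_castSucc_eq_empty_of_eq {j j' : Fin k} (h : j < j') (hc : c j = c j') :
    Vcell k c j.castSucc = ∅ := by
  refine eq_empty_of_forall_notMem fun x hx => ?_
  have hlt := hx.2.2 j'.castSucc (Fin.castSucc_lt_castSucc_iff.2 h)
  rw [cdistC_castSucc, cdistC_castSucc, hc] at hlt
  exact hlt.false

theorem Vcell_castSucc_eq_empty_of_mem_diagSet {j : Fin k} (hc : c j ∈ diagSet) :
    Vcell k c j.castSucc = ∅ := by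
  refine eq_empty_of_forall_notMem fun x hx => ?_
  have hlt := hx.2.2 (Fin.last k) j.castSucc_lt_last
  rw [cdistC_castSucc, cdistC_last] at hlt
  exact (Metric.infDist_le_dist_of_mem hc).not_gt hlt

def nearestDist (x : E2) : ℝ :=
  Finset.univ.inf' Finset.univ_nonempty fun j : Fin (k + 1) => cdistC k c j x

theorem nearestDist_le (j : Fin (k + 1)) (x : E2) : nearestDist c x ≤ cdistC k c j x :=
  Finset.inf'_le _ (Finset.mem_univ j)

theorem nearestDist_nonneg (x : E2) : 0 ≤ nearestDist c x :=
  Finset.le_inf' _ _ fun j _ => cdistC_nonneg c j x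

theorem measurable_nearestDist : Measurable (nearestDist c) :=
  (Continuous.finset_inf'_apply Finset.univ_nonempty fun j _ => continuous_cdistC c j).measurable

theorem cdistC_eq_nearestDist_of_mem_Vcell {j : Fin (k + 1)} {x : E2} (hx : x ∈ Vcell k c j) :
    cdistC k c j x = nearestDist c x := by
  refine le_antisymm (Finset.le_inf' _ _ fun j' _ => ?_) (nearestDist_le c j x)
  rcases lt_trichotomy j' j with h | rfl | h
  exacts [hx.2.1 j' h, le_rfl, (hx.2.2 j' h).le]

theorem exists_mem_Vcell {x : E2} (hx : x ∈ Omega) : ∃ j, x ∈ Vcell k c j := by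
  classical
  -- `Vcell` breaks ties in favour of the largest index, so take the largest minimizer.
  set T := Finset.univ.filter fun j : Fin (k + 1) => cdistC k c j x = nearestDist c x
  obtain ⟨i, -, hi⟩ := Finset.exists_mem_eq_inf' Finset.univ_nonempty
    fun j : Fin (k + 1) => cdistC k c j x
  have hT : T.Nonempty := ⟨i, Finset.mem_filter.2 ⟨Finset.mem_univ i, hi.symm⟩⟩
  have hmax : cdistC k c (T.max' hT) x = nearestDist c x := (Finset.mem_filter.1 (T.max'_mem hT)).2
  refine ⟨T.max' hT, hx, fun j' _ => hmax ▸ nearestDist_le c j' x, fun j' hj' => ?_⟩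
  refine hmax ▸ (nearestDist_le c j' x).lt_of_ne fun heq => hj'.not_ge ?_
  exact T.le_max' j' (Finset.mem_filter.2 ⟨Finset.mem_univ j', heq.symm⟩)

theorem measurableSet_Vcell (j : Fin (k + 1)) : MeasurableSet (Vcell k c j) := by
  have hd := fun i => (continuous_cdistC c i).measurable
  refine measurableSet_Omega.inter (measurableSet_setOfPred.2 (.and ?_ ?_)) <;>
    refine Measurable.forall fun j' => measurable_const.imp (measurableSet_setOfPred.1 ?_)
  exacts [measurableSet_le (hd j) (hd j'), measurableSet_lt (hd j) (hd j')]

theorem pairwise_disjoint_Vcell : Pairwise (Function.onFun Disjoint (Vcell k c)) := by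
  intro j j' hne
  refine Set.disjoint_left.2 fun x hx hx' => ?_
  rcases hne.lt_or_gt with h | h
  exacts [(hx'.2.1 j h).not_gt (hx.2.2 j' h), (hx.2.1 j' h).not_gt (hx'.2.2 j h)]

theorem iUnion_Vcell : ⋃ j, Vcell k c j = Omega :=
  (iUnion_subset fun _ _ hx => hx.1).antisymm fun _ hx => mem_iUnion.2 (exists_mem_Vcell c hx)

theorem distortion_eq_lintegral_nearestDist (p : ℝ) (μ : Measure E2) :
    distortion p μ k c = (∫⁻ x in Omega, ENNReal.ofReal (nearestDist c x ^ p) ∂μ) ^ (1 / p) := by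
  rw [distortion, ← iUnion_Vcell c,
    lintegral_iUnion (measurableSet_Vcell c) (pairwise_disjoint_Vcell c), tsum_fintype]
  congr 1
  refine Finset.sum_congr rfl fun j _ => setLIntegral_congr_fun (measurableSet_Vcell c j) ?_
  intro x hx
  simp only [cdistC_eq_nearestDist_of_mem_Vcell c hx]

theorem lintegral_nearestDist_le_Pers {p : ℝ} (hp : 0 ≤ p) (μ : Measure E2) :
    ∫⁻ x in Omega, ENNReal.ofReal (nearestDist c x ^ p) ∂μ ≤ Pers p μ := by
  refine lintegral_mono fun x => ENNReal.ofReal_le_ofReal ?_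
  refine Real.rpow_le_rpow (nearestDist_nonneg c x) ?_ hp
  exact cdistC_last c x ▸ nearestDist_le c (Fin.last k) x

theorem exists_ne_nearestDist_eq {j : Fin k} {x : E2} (hx : x ∈ Omega)
    (hxV : x ∉ Vcell k c j.castSucc) :
    ∃ i ≠ j.castSucc, nearestDist c x = cdistC k c i x := by
  obtain ⟨i, hi⟩ := exists_mem_Vcell c hx
  exact ⟨i, by rintro rfl; exact hxV hi, (cdistC_eq_nearestDist_of_mem_Vcell c hi).symm⟩

theorem cdistC_pos {j : Fin k} {x : E2} (hx : x ∈ Omega) (hxc : ∀ l ≠ j, c l ≠ x)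
    {i : Fin (k + 1)} (hi : i ≠ j.castSucc) : 0 < cdistC k c i x := by
  induction i using Fin.lastCases with
  | last => exact cdistC_last c x ▸ dDiag_pos_of_mem_Omega hx
  | cast l =>
    rw [cdistC_castSucc]
    exact dist_pos.2 (hxc l fun h => hi (h ▸ rfl)).symm

theorem isOpen_setOf_dist_lt_cdistC (j : Fin k) (y : E2) :
    IsOpen {x | ∀ i ≠ j.castSucc, dist x y < cdistC k c i x} := by
  simp only [ofPred_forall]
  exact isOpen_iInter_of_finite fun i => isOpen_iInter_of_finite fun _ =>
    isOpen_lt (continuous_id.dist continuous_const) (continuous_cdistC c i)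

theorem nearestDist_update_le {j : Fin k} (y : E2) {x : E2} (hx : x ∈ Omega)
    (hxV : x ∉ Vcell k c j.castSucc) : nearestDist (Function.update c j y) x ≤ nearestDist c x := by
  obtain ⟨i, hi, heq⟩ := exists_ne_nearestDist_eq c hx hxV
  exact heq ▸ cdistC_update_of_ne c y hi x ▸ nearestDist_le _ i x

theorem nearestDist_update_lt {j : Fin k} {x y : E2} (hx : x ∈ Omega)
    (hxV : x ∉ Vcell k c j.castSucc) (hxy : ∀ i ≠ j.castSucc, dist x y < cdistC k c i x) :
    nearestDist (Function.update c j y) x < nearestDist c x := by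
  obtain ⟨i, hi, heq⟩ := exists_ne_nearestDist_eq c hx hxV
  calc nearestDist (Function.update c j y) x ≤ dist x y := by
        simpa [cdistC_castSucc] using nearestDist_le (Function.update c j y) j.castSucc x
    _ < nearestDist c x := heq ▸ hxy i hi

theorem lintegral_nearestDist_update_lt {p : ℝ} (hp : 0 < p) {μ : Measure E2}
    (hμΩ : μ Omegaᶜ = 0) (hμp : Pers p μ < ⊤) {j : Fin k} (hV : μ (Vcell k c j.castSucc) = 0)
    {y : E2} (hy : y ∈ μ.support ∩ Omega) (hyc : ∀ l ≠ j, c l ≠ y) :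
    ∫⁻ x in Omega, ENNReal.ofReal (nearestDist (Function.update c j y) x ^ p) ∂μ <
      ∫⁻ x in Omega, ENNReal.ofReal (nearestDist c x ^ p) ∂μ := by
  set c' := Function.update c j y
  set U := {x | ∀ i ≠ j.castSucc, dist x y < cdistC k c i x}
  have hyU : y ∈ U := fun i hi => (dist_self y).symm ▸ cdistC_pos c hy.2 hyc hi
  have hμU : μ U ≠ 0 :=
    ((Measure.mem_support_iff_forall y).1 hy.1 U
      ((isOpen_setOf_dist_lt_cdistC c j y).mem_nhds hyU)).ne'
  have hΩ : ∀ᵐ x ∂μ, x ∈ Omega := mem_ae_iff.2 hμΩ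
  have hae : ∀ᵐ x ∂μ, x ∈ Omega ∧ x ∉ Vcell k c j.castSucc :=
    hΩ.and (measure_eq_zero_iff_ae_notMem.1 hV)
  have hfin := ((lintegral_nearestDist_le_Pers c' hp.le μ).trans_lt hμp).ne
  rw [Measure.restrict_eq_self_of_ae_mem hΩ] at hfin ⊢
  refine lintegral_strict_mono_of_ae_le_of_ae_lt_on
    ((measurable_nearestDist c).pow_const p).ennreal_ofReal.aemeasurable hfin
    (hae.mono fun x hx => ?_) hμU (hae.mono fun x hx hxU => ?_)
  · exact ENNReal.ofReal_le_ofReal <| Real.rpow_le_rpow (nearestDist_nonneg c' x)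
      (nearestDist_update_le c y hx.1 hx.2) hp.le
  · refine (ENNReal.ofReal_lt_ofReal_iff_of_nonneg
      (Real.rpow_nonneg (nearestDist_nonneg c' x) p)).2 ?_
    exact Real.rpow_lt_rpow (nearestDist_nonneg c' x) (nearestDist_update_lt c hx.1 hx.2 hxU) hp

end Voronoi

theorem Rstar_lt_distortion_of_measure_Vcell_eq_zero {p : ℝ} (hp : 0 < p) {k : ℕ}
    {μ : Measure E2} (hμΩ : μ Omegaᶜ = 0) (hμp : Pers p μ < ⊤)
    (hsupp : ∃ s : Finset E2, s.card = k ∧ ↑s ⊆ msupport μ)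
    {c : Fin k → E2} (hc : ∀ j, c j ∈ OmegaBar) {j : Fin k}
    (hV : μ (Vcell k c j.castSucc) = 0) :
    Rstar p μ k < distortion p μ k c := by
  classical
  obtain ⟨s, hs, hsμ⟩ := hsupp
  have hF : ((Finset.univ.erase j).image c).card < s.card :=
    Finset.card_image_le.trans_lt (by simpa [hs] using j.pos)
  obtain ⟨y, hy, hyc⟩ := exists_mem_support_inter_notMem hμΩ (msupport_eq_support μ ▸ hsμ) hF
  have hc' : ∀ i, Function.update c j y i ∈ OmegaBar := by
    intro i
    rcases eq_or_ne i j with rfl | hi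
    · rw [Function.update_self]
      exact Or.inl hy.2
    · rw [Function.update_of_ne hi]
      exact hc i
  calc Rstar p μ k ≤ distortion p μ k (Function.update c j y) := iInf₂_le _ hc'
    _ < distortion p μ k c := by
      rw [distortion_eq_lintegral_nearestDist, distortion_eq_lintegral_nearestDist]
      refine ENNReal.rpow_lt_rpow (lintegral_nearestDist_update_lt c hp hμΩ hμp hV hy ?_)
        (one_div_pos.2 hp)
      exact fun l hl hly => hyc (Finset.mem_image.2 ⟨l, by simpa using hl, hly⟩)

theorem statement6_general (p : ℝ) (hp : 1 ≤ p) (k : ℕ) (μ : Measure E2)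
    (hμΩ : μ Omegaᶜ = 0) (hμp : Pers p μ < ⊤)
    (hsupp : ∃ s : Finset E2, s.card = k ∧ ↑s ⊆ msupport μ) :
    (∀ c : Fin k → E2, (∀ j, c j ∈ OmegaBar) →
      (∃ j : Fin k, μ (Vcell k c j.castSucc) = 0) →
      Rstar p μ k < distortion p μ k c) ∧
    (∀ c : Fin k → E2, (∀ j, c j ∈ OmegaBar) →
      ((∃ j j' : Fin k, j ≠ j' ∧ c j = c j') ∨ (∃ j : Fin k, c j ∈ diagSet)) →
      Rstar p μ k < distortion p μ k c) := by
  have hp0 : 0 < p := zero_lt_one.trans_le hp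
  have key := fun c hc j hV =>
    Rstar_lt_distortion_of_measure_Vcell_eq_zero hp0 hμΩ hμp hsupp (c := c) hc (j := j) hV
  refine ⟨fun c hc ⟨j, hV⟩ => key c hc j hV, ?_⟩
  rintro c hc (⟨j, j', hne, heq⟩ | ⟨j, hdiag⟩)
  · rcases hne.lt_or_gt with h | h
    · exact key c hc j (by rw [Vcell_castSucc_eq_empty_of_eq c h heq, measure_empty])
    · exact key c hc j' (by rw [Vcell_castSucc_eq_empty_of_eq c h heq.symm, measure_empty])
  · exact key c hc j (by rw [Vcell_castSucc_eq_empty_of_mem_diagSet c hdiag, measure_empty])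

/-- Lemma: a codebook with an empty cell is not optimal.
If `μ` has at least `k` support points and `μ(V_j(c)) = 0` for some `1 ≤ j ≤ k`, then
`R_{k,p}(c) > R_k^*`; consequently a codebook with two equal centroids or with a centroid on
the diagonal is not optimal. -/
theorem statement6 (p : ℝ) (hp : 1 ≤ p) (k : ℕ) (hk : 1 ≤ k) (μ : Measure E2)
    (hμΩ : μ Omegaᶜ = 0) (hμp : Pers p μ < ⊤)
    (hsupp : ∃ s : Finset E2, s.card = k ∧ ↑s ⊆ msupport μ) :
    (∀ c : Fin k → E2, (∀ j, c j ∈ OmegaBar) →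
      (∃ j : Fin k, μ (Vcell k c j.castSucc) = 0) →
      Rstar p μ k < distortion p μ k c) ∧
    (∀ c : Fin k → E2, (∀ j, c j ∈ OmegaBar) →
      ((∃ j j' : Fin k, j ≠ j' ∧ c j = c j') ∨ (∃ j : Fin k, c j ∈ diagSet)) →
      Rstar p μ k < distortion p μ k c) :=
  statement6_general p hp k μ hμΩ hμp hsupp

end
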